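/- The extended 𝔟𝔪𝔰₄ bracket is a Lie bracket: on the complex vector space of quadruples (Y,Ȳ,T,ω) with Y ∈ W, Ȳ ∈ W̄, T,ω ∈ R, the bracket [(Y₁,Ȳ₁,T₁,ω₁),(Y₂,Ȳ₂,T₂,ω₂)] = (Ŷ,Ŷ̄,T̂,0) is bilinear, alternating, and satisfies the Jacobi identity, so it defines a complex Lie algebra. -/

import Mathlib

/-!
The extended `𝔟𝔪𝔰₄` bracket is a Lie bracket.

We work over `ℂ`.  The ring `R = ℂ[ζ,ζ⁻¹,ζ̄,ζ̄⁻¹]` of Laurent polynomials in two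
variables is modelled as the monoid algebra `LR := AddMonoidAlgebra ℂ (ℤ × ℤ)`,
the basis monomial `single (m, n) 1` representing `ζ^m ζ̄^n`, with the formal
partial derivatives `∂ = ∂_ζ` and `∂̄ = ∂_ζ̄`.  The rings `W = ℂ[ζ,ζ⁻¹]` and
`W̄ = ℂ[ζ̄,ζ̄⁻¹]` are modelled as copies of `AddMonoidAlgebra ℂ ℤ`, included
into `LR` via `ζ^m ↦ single (m,0)` resp. `ζ̄^n ↦ single (0,n)`, each carrying
its own formal derivative (`∂` on `W`, `∂̄` on `W̄`).
-/

/-- `R = ℂ[ζ,ζ⁻¹,ζ̄,ζ̄⁻¹]`. -/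
abbrev LR : Type := AddMonoidAlgebra ℂ (ℤ × ℤ)

/-- A copy of the Laurent polynomial ring `ℂ[ζ,ζ⁻¹]` (resp. `ℂ[ζ̄,ζ̄⁻¹]`) in one variable. -/
abbrev W : Type := AddMonoidAlgebra ℂ ℤ

/-- The formal derivative `∂ = ∂_ζ` on `R`. -/
noncomputable def pd : LR →ₗ[ℂ] LR :=
  (AddMonoidAlgebra.coeffLinearEquiv ℂ).symm.toLinearMap ∘ₗ
    (Finsupp.lsum ℂ fun mn : ℤ × ℤ => (mn.1 : ℂ) • Finsupp.lsingle (mn.1 - 1, mn.2) :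
      (ℤ × ℤ →₀ ℂ) →ₗ[ℂ] (ℤ × ℤ →₀ ℂ)) ∘ₗ (AddMonoidAlgebra.coeffLinearEquiv ℂ).toLinearMap

/-- The formal derivative `∂̄ = ∂_ζ̄` on `R`. -/
noncomputable def pdBar : LR →ₗ[ℂ] LR :=
  (AddMonoidAlgebra.coeffLinearEquiv ℂ).symm.toLinearMap ∘ₗ
    (Finsupp.lsum ℂ fun mn : ℤ × ℤ => (mn.2 : ℂ) • Finsupp.lsingle (mn.1, mn.2 - 1) :
      (ℤ × ℤ →₀ ℂ) →ₗ[ℂ] (ℤ × ℤ →₀ ℂ)) ∘ₗ (AddMonoidAlgebra.coeffLinearEquiv ℂ).toLinearMap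

/-- The formal derivative on the one-variable Laurent polynomial ring `W` (this is `∂`
on `W = ℂ[ζ,ζ⁻¹]` and `∂̄` on `W̄ = ℂ[ζ̄,ζ̄⁻¹]`). -/
noncomputable def wd : W →ₗ[ℂ] W :=
  (AddMonoidAlgebra.coeffLinearEquiv ℂ).symm.toLinearMap ∘ₗ
    (Finsupp.lsum ℂ fun m : ℤ => (m : ℂ) • Finsupp.lsingle (m - 1) :
      (ℤ →₀ ℂ) →ₗ[ℂ] (ℤ →₀ ℂ)) ∘ₗ (AddMonoidAlgebra.coeffLinearEquiv ℂ).toLinearMap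

/-- The inclusion `W = ℂ[ζ,ζ⁻¹] ↪ R`, `ζ^m ↦ ζ^m`. -/
noncomputable def incW : W →ₗ[ℂ] LR :=
  (AddMonoidAlgebra.coeffLinearEquiv ℂ).symm.toLinearMap ∘ₗ
    (Finsupp.lsum ℂ fun m : ℤ => Finsupp.lsingle (m, 0) :
      (ℤ →₀ ℂ) →ₗ[ℂ] (ℤ × ℤ →₀ ℂ)) ∘ₗ (AddMonoidAlgebra.coeffLinearEquiv ℂ).toLinearMap

/-- The inclusion `W̄ = ℂ[ζ̄,ζ̄⁻¹] ↪ R`, `ζ̄^n ↦ ζ̄^n`. -/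
noncomputable def incWbar : W →ₗ[ℂ] LR :=
  (AddMonoidAlgebra.coeffLinearEquiv ℂ).symm.toLinearMap ∘ₗ
    (Finsupp.lsum ℂ fun n : ℤ => Finsupp.lsingle (0, n) :
      (ℤ →₀ ℂ) →ₗ[ℂ] (ℤ × ℤ →₀ ℂ)) ∘ₗ (AddMonoidAlgebra.coeffLinearEquiv ℂ).toLinearMap

/-- The complex vector space of quadruples `(Y, Ȳ, T, ω)` with `Y ∈ W`, `Ȳ ∈ W̄`,
`T, ω ∈ R`. -/
abbrev ExtBms4 : Type := W × W × LR × LR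

/-- `ψ = ∂Y + ∂̄Ȳ ∈ R` associated to a quadruple. -/
noncomputable def psi (x : ExtBms4) : LR := incW (wd x.1) + incWbar (wd x.2.1)

/-- The extended `𝔟𝔪𝔰₄` bracket:
`[(Y₁,Ȳ₁,T₁,ω₁),(Y₂,Ȳ₂,T₂,ω₂)] = (Ŷ, Ŷ̄, T̂, 0)` with
`Ŷ = Y₁∂Y₂ − Y₂∂Y₁`, `Ŷ̄ = Ȳ₁∂̄Ȳ₂ − Ȳ₂∂̄Ȳ₁`,
`T̂ = Y₁∂T₂ + Ȳ₁∂̄T₂ − Y₂∂T₁ − Ȳ₂∂̄T₁ + ½(T₁ψ₂ − T₂ψ₁)` and `ω̂ = 0`. -/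
noncomputable def extBracket (x y : ExtBms4) : ExtBms4 :=
  ( x.1 * wd y.1 - y.1 * wd x.1,
    x.2.1 * wd y.2.1 - y.2.1 * wd x.2.1,
    incW x.1 * pd y.2.2.1 + incWbar x.2.1 * pdBar y.2.2.1
      - incW y.1 * pd x.2.2.1 - incWbar y.2.1 * pdBar x.2.2.1
      + (1 / 2 : ℂ) • (x.2.2.1 * psi y - y.2.2.1 * psi x),
    0 )

/-!
The bracket is a semidirect product: the pairs `(Y, Ȳ)` form two copies of the Witt algebra,
acting on `R` as the vector fields `X = Y∂ + Ȳ∂̄`, and `T` is acted on as a density of weight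
`-½`, `ρ_x T = X T - ½ ψ T` with `ψ = div X`. The `T`-component of `[x, y]` is
`ρ_x T_y - ρ_y T_x`, so the Jacobi identity reduces to `ρ` being a representation. That follows
from `[X₁, X₂] = X_{[x,y]}` (the partial derivatives commute, and each kills the Laurent
polynomials in the other variable) together with `ψ_{[x,y]} = X₁ψ₂ - X₂ψ₁`, since the
`½ ψ T` terms then cancel by the Leibniz rule. The `Y`- and `Ȳ`-components are brackets
`a ∂b - b ∂a`, which satisfy the Jacobi identity for any derivation of a commutative ring.
-/

open AddMonoidAlgebra

theorem AddMonoidAlgebra.leibniz_of_apply_single {k G : Type*} [CommSemiring k] [AddCommMonoid G]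
    (D : AddMonoidAlgebra k G →ₗ[k] AddMonoidAlgebra k G) (φ : G →+ k) (s : G)
    (hD : ∀ g c, D (single g c) = φ g • single (g + s) c) (a b : AddMonoidAlgebra k G) :
    D (a * b) = D a * b + a * D b := by
  induction a using AddMonoidAlgebra.induction_linear with
  | zero => simp
  | add f g hf hg => simp only [add_mul, map_add, hf, hg]; abel
  | single g c =>
    induction b using AddMonoidAlgebra.induction_linear with
    | zero => simp
    | add f f' hf hf' => simp only [mul_add, map_add, hf, hf']; abel
    | single h d =>
      simp only [single_mul_single, hD, smul_mul_assoc, mul_smul_comm, map_add]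
      rw [add_smul, ← add_assoc, add_right_comm g h s]

theorem AddMonoidAlgebra.lhom_apply_eq_of_forall_single {k G M : Type*} [Semiring k]
    [AddCommMonoid M] [Module k M] {f g : AddMonoidAlgebra k G →ₗ[k] M}
    (h : ∀ a c, f (single a c) = g (single a c)) (x : AddMonoidAlgebra k G) : f x = g x :=
  congr($(lhom_ext' fun a => LinearMap.ext fun c => h a c) x)

def wittBracket {A : Type*} [Mul A] [Sub A] (D : A → A) (a b : A) : A := a * D b - b * D a

theorem wittBracket_jacobi {A : Type*} [CommRing A] (D : A →+ A)
    (hD : ∀ a b, D (a * b) = D a * b + a * D b) (a b c : A) :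
    wittBracket D a (wittBracket D b c) + wittBracket D b (wittBracket D c a)
      + wittBracket D c (wittBracket D a b) = 0 := by
  simp only [wittBracket, map_sub, hD]
  ring

section Monomials

variable (m n : ℤ) (c : ℂ)

theorem wd_single : wd (single m c) = (m : ℂ) • single (m - 1) c := by
  simp only [wd, LinearMap.comp_apply, LinearEquiv.coe_coe, coeffLinearEquiv_apply,
    coeff_single, Finsupp.lsum_single, LinearMap.smul_apply, Finsupp.lsingle_apply,
    coeffLinearEquiv_symm_apply, ofCoeff_smul, ofCoeff_single]

theorem pd_single : pd (single (m, n) c) = (m : ℂ) • single (m - 1, n) c := by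
  simp only [pd, LinearMap.comp_apply, LinearEquiv.coe_coe, coeffLinearEquiv_apply,
    coeff_single, Finsupp.lsum_single, LinearMap.smul_apply, Finsupp.lsingle_apply,
    coeffLinearEquiv_symm_apply, ofCoeff_smul, ofCoeff_single]

theorem pdBar_single : pdBar (single (m, n) c) = (n : ℂ) • single (m, n - 1) c := by
  simp only [pdBar, LinearMap.comp_apply, LinearEquiv.coe_coe, coeffLinearEquiv_apply,
    coeff_single, Finsupp.lsum_single, LinearMap.smul_apply, Finsupp.lsingle_apply,
    coeffLinearEquiv_symm_apply, ofCoeff_smul, ofCoeff_single]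

theorem incW_single : incW (single m c) = single ((m, 0) : ℤ × ℤ) c := by
  simp only [incW, LinearMap.comp_apply, LinearEquiv.coe_coe, coeffLinearEquiv_apply,
    coeff_single, Finsupp.lsum_single, Finsupp.lsingle_apply,
    coeffLinearEquiv_symm_apply, ofCoeff_single]

theorem incWbar_single : incWbar (single n c) = single ((0, n) : ℤ × ℤ) c := by
  simp only [incWbar, LinearMap.comp_apply, LinearEquiv.coe_coe, coeffLinearEquiv_apply,
    coeff_single, Finsupp.lsum_single, Finsupp.lsingle_apply,
    coeffLinearEquiv_symm_apply, ofCoeff_single]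

end Monomials

theorem wd_mul (a b : W) : wd (a * b) = wd a * b + a * wd b :=
  leibniz_of_apply_single wd (Int.castAddHom ℂ) (-1)
    (fun m c => by rw [wd_single, ← sub_eq_add_neg]; rfl) a b

theorem pd_mul (a b : LR) : pd (a * b) = pd a * b + a * pd b :=
  leibniz_of_apply_single pd ((Int.castAddHom ℂ).comp (AddMonoidHom.fst ℤ ℤ)) (-1, 0)
    (fun ⟨m, n⟩ c => by rw [pd_single, Prod.mk_add_mk, ← sub_eq_add_neg, add_zero]; rfl) a b

theorem pdBar_mul (a b : LR) : pdBar (a * b) = pdBar a * b + a * pdBar b :=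
  leibniz_of_apply_single pdBar ((Int.castAddHom ℂ).comp (AddMonoidHom.snd ℤ ℤ)) (0, -1)
    (fun ⟨m, n⟩ c => by rw [pdBar_single, Prod.mk_add_mk, ← sub_eq_add_neg, add_zero]; rfl) a b

theorem incW_eq_mapDomain (a : W) : incW a = mapDomainAlgHom ℂ ℂ (AddMonoidHom.inl ℤ ℤ) a :=
  lhom_apply_eq_of_forall_single (g := (mapDomainAlgHom ℂ ℂ (AddMonoidHom.inl ℤ ℤ)).toLinearMap)
    (fun m c => by
      simp only [incW_single, AlgHom.toLinearMap_apply, mapDomainAlgHom_apply, mapDomain_single,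
        AddMonoidHom.inl_apply]) a

theorem incWbar_eq_mapDomain (a : W) : incWbar a = mapDomainAlgHom ℂ ℂ (AddMonoidHom.inr ℤ ℤ) a :=
  lhom_apply_eq_of_forall_single (g := (mapDomainAlgHom ℂ ℂ (AddMonoidHom.inr ℤ ℤ)).toLinearMap)
    (fun n c => by
      simp only [incWbar_single, AlgHom.toLinearMap_apply, mapDomainAlgHom_apply, mapDomain_single,
        AddMonoidHom.inr_apply]) a

theorem incW_mul (a b : W) : incW (a * b) = incW a * incW b := by
  simp only [incW_eq_mapDomain, map_mul]

theorem incWbar_mul (a b : W) : incWbar (a * b) = incWbar a * incWbar b := by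
  simp only [incWbar_eq_mapDomain, map_mul]

theorem pd_incW (a : W) : pd (incW a) = incW (wd a) :=
  lhom_apply_eq_of_forall_single (f := pd ∘ₗ incW) (g := incW ∘ₗ wd)
    (fun m c => by simp only [LinearMap.comp_apply, incW_single, pd_single, wd_single, map_smul]) a

theorem pdBar_incW (a : W) : pdBar (incW a) = 0 :=
  lhom_apply_eq_of_forall_single (f := pdBar ∘ₗ incW) (g := 0)
    (fun m c => by
      simp only [LinearMap.comp_apply, incW_single, pdBar_single, Int.cast_zero, zero_smul,
        LinearMap.zero_apply]) a

theorem pd_incWbar (a : W) : pd (incWbar a) = 0 :=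
  lhom_apply_eq_of_forall_single (f := pd ∘ₗ incWbar) (g := 0)
    (fun n c => by
      simp only [LinearMap.comp_apply, incWbar_single, pd_single, Int.cast_zero, zero_smul,
        LinearMap.zero_apply]) a

theorem pdBar_incWbar (a : W) : pdBar (incWbar a) = incWbar (wd a) :=
  lhom_apply_eq_of_forall_single (f := pdBar ∘ₗ incWbar) (g := incWbar ∘ₗ wd)
    (fun n c => by
      simp only [LinearMap.comp_apply, incWbar_single, pdBar_single, wd_single, map_smul]) a

theorem pdBar_pd (a : LR) : pdBar (pd a) = pd (pdBar a) :=
  lhom_apply_eq_of_forall_single (f := pdBar ∘ₗ pd) (g := pd ∘ₗ pdBar)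
    (fun ⟨m, n⟩ c => by
      simp only [LinearMap.comp_apply, pd_single, pdBar_single, map_smul, smul_comm (m : ℂ)]) a

noncomputable def vectorField (x : ExtBms4) : LR →ₗ[ℂ] LR :=
  LinearMap.mulLeft ℂ (incW x.1) ∘ₗ pd + LinearMap.mulLeft ℂ (incWbar x.2.1) ∘ₗ pdBar

theorem vectorField_apply (x : ExtBms4) (T : LR) :
    vectorField x T = incW x.1 * pd T + incWbar x.2.1 * pdBar T := rfl

noncomputable def densityAction (x : ExtBms4) : LR →ₗ[ℂ] LR :=
  vectorField x - (1 / 2 : ℂ) • LinearMap.mulLeft ℂ (psi x)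

theorem densityAction_apply (x : ExtBms4) (T : LR) :
    densityAction x T = vectorField x T - (1 / 2 : ℂ) • (psi x * T) := rfl

theorem vectorField_mul (x : ExtBms4) (a b : LR) :
    vectorField x (a * b) = vectorField x a * b + a * vectorField x b := by
  simp only [vectorField_apply, pd_mul, pdBar_mul]
  ring

theorem vectorField_extBracket (x y : ExtBms4) (T : LR) :
    vectorField (extBracket x y) T
      = vectorField x (vectorField y T) - vectorField y (vectorField x T) := by
  simp only [vectorField_apply, extBracket, map_sub, map_add, incW_mul, incWbar_mul, pd_mul,
    pdBar_mul, pd_incW, pdBar_incW, pd_incWbar, pdBar_incWbar, pdBar_pd]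
  ring

theorem psi_extBracket (x y : ExtBms4) :
    psi (extBracket x y) = vectorField x (psi y) - vectorField y (psi x) := by
  simp only [vectorField_apply, psi, extBracket, map_sub, map_add, wd_mul, incW_mul, incWbar_mul,
    pd_incW, pdBar_incW, pd_incWbar, pdBar_incWbar]
  ring

theorem densityAction_extBracket (x y : ExtBms4) (T : LR) :
    densityAction (extBracket x y) T
      = densityAction x (densityAction y T) - densityAction y (densityAction x T) := by
  simp only [densityAction_apply, vectorField_extBracket, psi_extBracket, map_sub, map_smul,
    vectorField_mul]
  simp only [Algebra.smul_def]
  ring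

theorem extBracket_snd_snd_fst (x y : ExtBms4) :
    (extBracket x y).2.2.1 = densityAction x y.2.2.1 - densityAction y x.2.2.1 := by
  simp only [extBracket, densityAction_apply, vectorField_apply, Algebra.smul_def]
  ring

theorem extBracket_jacobi (x y z : ExtBms4) :
    extBracket x (extBracket y z) + extBracket y (extBracket z x)
      + extBracket z (extBracket x y) = 0 := by
  refine Prod.ext (wittBracket_jacobi wd.toAddMonoidHom wd_mul x.1 y.1 z.1)
    (Prod.ext (wittBracket_jacobi wd.toAddMonoidHom wd_mul x.2.1 y.2.1 z.2.1) (Prod.ext ?_ ?_))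
  · simp only [Prod.fst_add, Prod.snd_add, Prod.fst_zero, Prod.snd_zero, extBracket_snd_snd_fst,
      densityAction_extBracket, map_sub]
    abel
  · simp only [Prod.snd_add, Prod.snd_zero, extBracket, add_zero]

theorem extBracket_swap (x y : ExtBms4) : extBracket y x = -extBracket x y :=
  Prod.ext (neg_sub _ _).symm <| Prod.ext (neg_sub _ _).symm <| Prod.ext
    (by simp only [Prod.snd_neg, Prod.fst_neg, extBracket_snd_snd_fst, neg_sub])
    neg_zero.symm

theorem extBracket_self (x : ExtBms4) : extBracket x x = 0 :=
  Prod.ext (sub_self _) <| Prod.ext (sub_self _) <| Prod.ext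
    ((extBracket_snd_snd_fst x x).trans (sub_self _)) rfl

theorem extBracket_smul_add (a : ℂ) (x y y' : ExtBms4) :
    extBracket x (a • y + y') = a • extBracket x y + extBracket x y' := by
  refine Prod.ext ?_ (Prod.ext ?_ (Prod.ext ?_ ?_)) <;>
    simp only [extBracket, psi, Prod.fst_add, Prod.snd_add, Prod.smul_fst, Prod.smul_snd,
      map_add, map_smul, smul_zero, add_zero]
  all_goals simp only [Algebra.smul_def]; ring

/-- The extended `𝔟𝔪𝔰₄` bracket is bilinear, alternating and satisfies
the Jacobi identity on the space of quadruples `(Y,Ȳ,T,ω)`, hence defines a complex Lie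
algebra structure on it. -/
theorem extBracket_is_lie_bracket :
    (∀ (a : ℂ) (x x' y : ExtBms4),
        extBracket (a • x + x') y = a • extBracket x y + extBracket x' y) ∧
    (∀ (a : ℂ) (x y y' : ExtBms4),
        extBracket x (a • y + y') = a • extBracket x y + extBracket x y') ∧
    (∀ x : ExtBms4, extBracket x x = 0) ∧
    (∀ x y z : ExtBms4,
        extBracket x (extBracket y z) + extBracket y (extBracket z x)
          + extBracket z (extBracket x y) = 0) := by
  refine ⟨fun a x x' y => ?_, extBracket_smul_add, extBracket_self, extBracket_jacobi⟩
  rw [extBracket_swap y, extBracket_smul_add, extBracket_swap x y, extBracket_swap x' y]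
  module
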